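/- arXiv:2408.06493 — 2 statements merged into one kernel-verified Lean document; each statement's English description precedes it below -/
import Mathlib

section
/- Fix n : ℕ, real angles β, γ, and a finite set T of bit strings (Fin n → Bool). Let C_T be the diagonal complex matrix indexed by bit strings with entry 1 at each z ∈ T and 0 otherwise, let X be the matrix with X z k = 1 if hammingDist z k = 1 and 0 otherwise, and let u be the vector whose every entry equals ((2:ℂ)^n)^(−1/2) (the uniform superposition |+⟩^{⊗n}). Let ψ := Matrix.exp(−(i·β)•X) *ᵥ (Matrix.exp(−(i·γ)•C_T) *ᵥ u). Then for every k : Fin n → Bool, ψ k = ((2:ℂ)^n)^(−1/2) · ( exp(−i·γ) · Σ_{z ∈ T} f(β,z,k) + Σ_{z ∉ T} f(β,z,k) ), where f(β,z,k) := (cos β)^(n − hammingDist z k) · (−i · sin β)^(hammingDist z k) and the second sum runs over all bit strings not in T. -/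
/-!
Write `X = ∑ⱼ Xⱼ`, where `Xⱼ` is the Pauli matrix `X` acting on bit `j`. The `Xⱼ` commute and
square to `1`, so `exp (-iβ X) = ∏ⱼ (cos β • 1 - i sin β • Xⱼ)`, which is the Kronecker product
of `n` copies of `cos β • 1 - i sin β • X` on `Bool`; its `(z, w)` entry is
`cos β ^ (n - d) * (-i sin β) ^ d` with `d = hammingDist z w`. The phase operator is diagonal and
multiplies the amplitude of `z` by `exp (-iγ)` exactly when `z ∈ T`.
-/

open Complex Matrix NormedSpace Finset

theorem exp_smul_of_mul_self_eq_one {𝔸 : Type*} [Ring 𝔸] [Algebra ℂ 𝔸] [TopologicalSpace 𝔸]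
    [IsTopologicalRing 𝔸] [ContinuousSMul ℂ 𝔸] [T2Space 𝔸] {A : 𝔸} (hA : A * A = 1) (z : ℂ) :
    exp (z • A) = cosh z • (1 : 𝔸) + sinh z • A := by
  have hsq : A ^ 2 = 1 := by rw [sq, hA]
  rw [exp_eq_tsum ℂ]
  refine (HasSum.even_add_odd ?_ ?_).tsum_eq
  · convert (hasSum_cosh z).smul_const (1 : 𝔸) using 2 with m
    rw [smul_pow, pow_mul A, hsq, one_pow, smul_smul, div_eq_inv_mul]
  · convert (hasSum_sinh z).smul_const A using 2 with m
    rw [smul_pow, pow_succ A, pow_mul A, hsq, one_pow, one_mul, smul_smul, div_eq_inv_mul]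

section

variable {ι α R : Type*} [Fintype ι] [CommSemiring R]

def piKronecker (A : ι → Matrix α α R) : Matrix (ι → α) (ι → α) R :=
  of fun z w => ∏ i, A i (z i) (w i)

theorem piKronecker_mul [Fintype α] [DecidableEq ι] (A B : ι → Matrix α α R) :
    piKronecker A * piKronecker B = piKronecker (A * B) := by
  ext z w
  simp only [piKronecker, mul_apply, of_apply, Pi.mul_apply, Fintype.prod_sum]
  simp only [← Finset.prod_mul_distrib]

theorem piKronecker_one [DecidableEq α] : piKronecker (1 : ι → Matrix α α R) = 1 := by
  ext z w
  simp only [piKronecker, of_apply, Pi.one_apply, one_apply, Finset.prod_boole, funext_iff]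
  simp

theorem Commute.piKronecker [Fintype α] [DecidableEq ι] {A B : ι → Matrix α α R}
    (h : ∀ i, Commute (A i) (B i)) :
    Commute (piKronecker A) (piKronecker B) := by
  rw [Commute, SemiconjBy, piKronecker_mul, piKronecker_mul, (Pi.commute_iff.2 h).eq]

theorem piKronecker_update_apply [DecidableEq ι] (A : ι → Matrix α α R) (j : ι)
    (B : Matrix α α R) (z w : ι → α) :
    piKronecker (Function.update A j B) z w =
      B (z j) (w j) * ∏ i ∈ univ.erase j, A i (z i) (w i) := by
  rw [piKronecker, of_apply, ← mul_prod_erase _ _ (mem_univ j), Function.update_self]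
  congr 1
  exact prod_congr rfl fun i hi => by rw [Function.update_of_ne (ne_of_mem_erase hi)]

theorem piKronecker_update_add_smul [DecidableEq ι] (A : ι → Matrix α α R) (j : ι)
    (B C : Matrix α α R) (c d : R) :
    c • piKronecker (Function.update A j B) + d • piKronecker (Function.update A j C) =
      piKronecker (Function.update A j (c • B + d • C)) := by
  ext z w
  simp only [Matrix.add_apply, Matrix.smul_apply, piKronecker_update_apply, smul_eq_mul]
  ring

def pauliX : Matrix Bool Bool R := of fun a b => if a = b then 0 else 1

theorem pauliX_mul_self : (pauliX : Matrix Bool Bool R) * pauliX = 1 := by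
  ext a b
  cases a <;> cases b <;> simp [pauliX, mul_apply]

variable [DecidableEq ι]

def pauliXAt (j : ι) : Matrix (ι → Bool) (ι → Bool) R :=
  piKronecker (Function.update 1 j pauliX)

theorem pauliXAt_mul_self (j : ι) : (pauliXAt j : Matrix _ _ R) * pauliXAt j = 1 := by
  rw [pauliXAt, piKronecker_mul, ← Function.update_mul, one_mul, pauliX_mul_self,
    Function.update_one, piKronecker_one]

theorem commute_pauliXAt (j l : ι) : Commute (pauliXAt j : Matrix _ _ R) (pauliXAt l) := by
  refine Commute.piKronecker fun i => ?_
  rcases eq_or_ne i j with rfl | hij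
  · rcases eq_or_ne i l with rfl | hil
    · rfl
    · rw [Function.update_of_ne hil]; exact Commute.one_right _
  · rw [Function.update_of_ne hij]; exact Commute.one_left _

theorem sum_ite_eq_singleton (s : Finset ι) :
    ∑ j, (if s = {j} then (1 : R) else 0) = if #s = 1 then 1 else 0 := by
  split_ifs with hs
  · obtain ⟨a, rfl⟩ := card_eq_one.mp hs
    simp
  · exact sum_eq_zero fun j _ => if_neg fun h : s = {j} => hs (h ▸ card_singleton j)

theorem pauliXAt_apply (j : ι) (z w : ι → Bool) :
    (pauliXAt j : Matrix _ _ R) z w = if ({i | z i ≠ w i} : Finset ι) = {j} then 1 else 0 := by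
  rw [pauliXAt, piKronecker_update_apply]
  simp only [pauliX, of_apply, Pi.one_apply, one_apply, prod_boole, ite_mul, zero_mul, one_mul,
    mem_erase, eq_singleton_iff_unique_mem, mem_filter, mem_univ, true_and, and_true]
  by_cases hj : z j = w j
  · simp [hj]
  · simp only [hj, if_false, not_false_eq_true, true_and, ne_eq]
    simp_rw [not_imp_comm (a := z _ = w _)]

def hammingAdj : Matrix (ι → Bool) (ι → Bool) R :=
  of fun z w => if hammingDist z w = 1 then 1 else 0

theorem sum_pauliXAt : ∑ j, (pauliXAt j : Matrix (ι → Bool) (ι → Bool) R) = hammingAdj := by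
  ext z w
  simp only [Matrix.sum_apply, pauliXAt_apply, sum_ite_eq_singleton, hammingAdj, of_apply]
  rfl

theorem exp_smul_pauliXAt (c : ℂ) (j : ι) :
    exp (c • pauliXAt j : Matrix (ι → Bool) (ι → Bool) ℂ) =
      piKronecker (Function.update 1 j (cosh c • 1 + sinh c • pauliX)) := by
  rw [exp_smul_of_mul_self_eq_one (pauliXAt_mul_self j), ← piKronecker_update_add_smul,
    Function.update_one, piKronecker_one, pauliXAt]

theorem exp_smul_sum_pauliXAt (c : ℂ) (s : Finset ι) :
    exp (c • ∑ j ∈ s, pauliXAt j : Matrix (ι → Bool) (ι → Bool) ℂ) =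
      piKronecker fun j => if j ∈ s then cosh c • 1 + sinh c • pauliX else 1 := by
  induction s using Finset.induction_on with
  | empty => simp [← Pi.one_def, piKronecker_one]
  | insert a s ha ih =>
    have hcomm : Commute (c • pauliXAt a) (c • ∑ j ∈ s, pauliXAt j : Matrix _ _ ℂ) :=
      ((Commute.sum_right _ _ _ fun l _ => commute_pauliXAt a l).smul_left c).smul_right c
    rw [sum_insert ha, smul_add, Matrix.exp_add_of_commute _ _ hcomm, exp_smul_pauliXAt, ih,
      piKronecker_mul]
    congr 1
    ext1 i
    rcases eq_or_ne i a with rfl | hia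
    · simp [ha]
    · simp [hia]

theorem exp_smul_hammingAdj_apply (c : ℂ) (x y : ι → Bool) :
    exp (c • hammingAdj : Matrix (ι → Bool) (ι → Bool) ℂ) x y =
      cosh c ^ (Fintype.card ι - hammingDist x y) * sinh c ^ hammingDist x y := by
  rw [← sum_pauliXAt, exp_smul_sum_pauliXAt]
  have hentry (a b : Bool) :
      (cosh c • 1 + sinh c • pauliX : Matrix Bool Bool ℂ) a b =
        if a = b then cosh c else sinh c := by
    cases a <;> cases b <;> simp [pauliX]
  have hcard : #{i | x i = y i} + hammingDist x y = Fintype.card ι :=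
    card_filter_add_card_filter_not _
  simp only [mem_univ, if_true, piKronecker, of_apply, hentry, prod_ite, prod_const]
  rw [← hcard, Nat.add_sub_cancel, hammingDist]

end

theorem qaoa_state_entry (n : ℕ) (β γ : ℝ) (T : Finset (Fin n → Bool))
    (k : Fin n → Bool) :
    let C_T : Matrix (Fin n → Bool) (Fin n → Bool) ℂ :=
      Matrix.diagonal (fun z => if z ∈ T then 1 else 0)
    let X : Matrix (Fin n → Bool) (Fin n → Bool) ℂ :=
      Matrix.of (fun z k => if hammingDist z k = 1 then (1 : ℂ) else 0)
    let u : (Fin n → Bool) → ℂ := fun _ => ((2 : ℂ) ^ n) ^ (-(1 / 2 : ℂ))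
    let f : ℝ → (Fin n → Bool) → (Fin n → Bool) → ℂ := fun β z k =>
      (Real.cos β : ℂ) ^ (n - hammingDist z k) *
        (-(Complex.I * Real.sin β)) ^ (hammingDist z k)
    let ψ : (Fin n → Bool) → ℂ :=
      NormedSpace.exp ((-(Complex.I * β)) • X) *ᵥ
        (NormedSpace.exp ((-(Complex.I * γ)) • C_T) *ᵥ u)
    ψ k = ((2 : ℂ) ^ n) ^ (-(1 / 2 : ℂ)) *
      (Complex.exp (-(Complex.I * γ)) * ∑ z ∈ T, f β z k + ∑ z ∈ Tᶜ, f β z k) := by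
  intro C_T X u f ψ
  set e := Complex.exp (-(I * γ))
  have hC : exp ((-(I * γ)) • C_T) = diagonal fun z => if z ∈ T then e else 1 := by
    rw [← diagonal_smul, Matrix.exp_diagonal]
    congr 1
    ext z
    split_ifs with hz <;> simp [e, hz, Complex.exp_eq_exp_ℂ]
  have hX (z : Fin n → Bool) : exp ((-(I * β)) • X) k z = f β z k := by
    rw [show X = hammingAdj from rfl, exp_smul_hammingAdj_apply, Fintype.card_fin,
      hammingDist_comm]
    simp [f, mul_comm I, cosh_mul_I, sinh_mul_I]
  calc ψ k = ∑ z, f β z k * ((if z ∈ T then e else 1) * u z) := by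
        have hD : diagonal (fun z => if z ∈ T then e else 1) *ᵥ u =
            fun z => (if z ∈ T then e else 1) * u z := funext (mulVec_diagonal _ _)
        simp only [ψ, hC, hD, mulVec, dotProduct, hX]
    _ = _ := by
        rw [← sum_add_sum_compl T, mul_add, mul_sum, mul_sum, mul_sum]
        congr 1 <;> refine sum_congr rfl fun z hz => ?_
        · rw [if_pos hz]; ring
        · rw [if_neg (mem_compl.mp hz)]; ring
end

section
/- (Uniform target sampling, joint distance counts.) Fix n ≥ 1, a bit string k : Fin n → Bool, and naturals d₁, d₂, t, x₁, x₂ with 1 ≤ d₁ ≤ n, 1 ≤ d₂ ≤ n, d₁ ≠ d₂, and x₁ + x₂ < t. Then the number of finite sets T of bit strings (Fin n → Bool) with |T| = t, k ∈ T, |{z ∈ T | hammingDist z k = d₁}| = x₁, and |{z ∈ T | hammingDist z k = d₂}| = x₂ equals (n.choose d₁).choose x₁ * (n.choose d₂).choose x₂ * (2^n − 1 − n.choose d₁ − n.choose d₂).choose (t − 1 − x₁ − x₂). -/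
/-!
Removing `k` identifies the sets `T` with the `(t - 1)`-subsets of the other strings. Such a
subset splits uniquely into `x₁` strings of the Hamming sphere of radius `d₁` about `k`, `x₂` of
the sphere of radius `d₂`, and the remaining `t - 1 - x₁ - x₂` strings outside both spheres; the
three choices are independent. A string at distance `d` from `k` is determined by the `d`
coordinates where it differs from `k`, so each sphere has `n.choose d` points, and neither
contains `k` because `d₁, d₂ ≥ 1`.
-/

open Finset

section
variable {α : Type*}

theorem card_filter_not_and_not {P Q : α → Prop} [DecidablePred P] [DecidablePred Q]
    (S : Finset α) (hPQ : ∀ x, P x → ¬Q x) :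
    #{x ∈ S | ¬P x ∧ ¬Q x} = #S - #{x ∈ S | P x} - #{x ∈ S | Q x} := by
  have hQ : {x ∈ S | ¬P x ∧ Q x} = {x ∈ S | Q x} :=
    filter_congr fun x _ => ⟨And.right, fun hx => ⟨fun hPx => hPQ x hPx hx, hx⟩⟩
  have hP := card_filter_add_card_filter_not (s := S) fun x => P x
  have hPQ' := card_filter_add_card_filter_not (s := {x ∈ S | ¬P x}) fun x => Q x
  rw [filter_filter, filter_filter, hQ] at hPQ'
  omega

variable [DecidableEq α]

theorem filter_union_of_forall_of_forall_not (P : α → Prop) [DecidablePred P]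
    {A B : Finset α} (hA : ∀ x ∈ A, P x) (hB : ∀ x ∈ B, ¬P x) :
    {x ∈ A ∪ B | P x} = A ∧ {x ∈ A ∪ B | ¬P x} = B := by
  simp only [filter_union, filter_true_of_mem hA, filter_false_of_mem hB, union_empty,
    filter_false_of_mem fun x hx => not_not_intro (hA x hx), filter_true_of_mem hB,
    empty_union, and_self]

theorem card_powersetCard_filter_card_filter_eq_and (S : Finset α) (P : α → Prop)
    [DecidablePred P] (p : Finset α → Prop) [DecidablePred p] {a t : ℕ} (hat : a ≤ t) :
    #{T ∈ S.powersetCard t | #{x ∈ T | P x} = a ∧ p {x ∈ T | ¬P x}} =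
      (#{x ∈ S | P x}).choose a * #{U ∈ {x ∈ S | ¬P x}.powersetCard (t - a) | p U} := by
  rw [← card_powersetCard, ← card_product]
  refine card_nbij' (fun T => ({x ∈ T | P x}, {x ∈ T | ¬P x})) (fun AB => AB.1 ∪ AB.2)
    ?_ ?_ ?_ ?_
  · intro T hT
    simp only [mem_coe, mem_filter, mem_powersetCard, mem_product] at hT ⊢
    obtain ⟨⟨hTS, hTt⟩, hTa, hp⟩ := hT
    have := card_filter_add_card_filter_not (s := T) fun x => P x
    exact ⟨⟨filter_subset_filter _ hTS, hTa⟩, ⟨filter_subset_filter _ hTS, by omega⟩, hp⟩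
  · rintro ⟨A, B⟩ hAB
    simp only [mem_coe, mem_filter, mem_powersetCard, mem_product] at hAB ⊢
    obtain ⟨⟨hA, hAa⟩, ⟨hB, hBt⟩, hp⟩ := hAB
    have hAP : ∀ x ∈ A, P x := fun x hx => (mem_filter.1 (hA hx)).2
    have hBP : ∀ x ∈ B, ¬P x := fun x hx => (mem_filter.1 (hB hx)).2
    obtain ⟨hA', hB'⟩ := filter_union_of_forall_of_forall_not P hAP hBP
    have hdisj : Disjoint A B := disjoint_left.2 fun x hxA hxB => hBP x hxB (hAP x hxA)
    rw [hA', hB', card_union_of_disjoint hdisj]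
    exact ⟨⟨union_subset (hA.trans (filter_subset _ _)) (hB.trans (filter_subset _ _)),
      by omega⟩, hAa, hp⟩
  · intro T _
    exact filter_union_filter_not_eq P T
  · rintro ⟨A, B⟩ hAB
    simp only [mem_coe, mem_product, mem_filter, mem_powersetCard] at hAB
    obtain ⟨⟨hA, -⟩, ⟨hB, -⟩, -⟩ := hAB
    obtain ⟨hA', hB'⟩ := filter_union_of_forall_of_forall_not P
      (fun x hx => (mem_filter.1 (hA hx)).2) (fun x hx => (mem_filter.1 (hB hx)).2)
    exact Prod.ext hA' hB'

theorem card_powersetCard_filter_card_filter_eq (S : Finset α) (P : α → Prop)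
    [DecidablePred P] {a t : ℕ} (hat : a ≤ t) :
    #{T ∈ S.powersetCard t | #{x ∈ T | P x} = a} =
      (#{x ∈ S | P x}).choose a * (#{x ∈ S | ¬P x}).choose (t - a) := by
  simpa using card_powersetCard_filter_card_filter_eq_and S P (fun _ => True) hat

theorem card_powersetCard_filter_card_filter_eq_and_card_filter_eq
    {P Q : α → Prop} [DecidablePred P] [DecidablePred Q] (S : Finset α)
    (hPQ : ∀ x, P x → ¬Q x) {a b t : ℕ} (habt : a + b ≤ t) :
    #{T ∈ S.powersetCard t | #{x ∈ T | P x} = a ∧ #{x ∈ T | Q x} = b} =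
      (#{x ∈ S | P x}).choose a * (#{x ∈ S | Q x}).choose b *
        (#{x ∈ S | ¬P x ∧ ¬Q x}).choose (t - a - b) := by
  have hQ (T : Finset α) : {x ∈ T | Q x} = {x ∈ {x ∈ T | ¬P x} | Q x} := by
    rw [filter_filter]
    exact filter_congr fun x _ => ⟨fun hx => ⟨fun hPx => hPQ x hPx hx, hx⟩, And.right⟩
  -- single pass, since the right-hand side of `hQ` contains its left-hand side
  simp +singlePass only [hQ]
  rw [card_powersetCard_filter_card_filter_eq_and S P (fun U => #{x ∈ U | Q x} = b) (by omega),
    card_powersetCard_filter_card_filter_eq _ Q (by omega), ← hQ, filter_filter, mul_assoc]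

theorem card_filter_card_eq_and_mem_and [Fintype α] (k : α) (p : Finset α → Prop)
    [DecidablePred p] {t : ℕ} (ht : 1 ≤ t) :
    #{T : Finset α | #T = t ∧ k ∈ T ∧ p T} =
      #{U ∈ (univ.erase k).powersetCard (t - 1) | p (insert k U)} := by
  refine card_nbij' (fun T => T.erase k) (fun U => insert k U) ?_ ?_ ?_ ?_
  · intro T hT
    simp only [mem_coe, mem_filter, mem_univ, true_and, mem_powersetCard] at hT ⊢
    obtain ⟨hTt, hkT, hp⟩ := hT
    exact ⟨⟨erase_subset_erase k (subset_univ T), by rw [card_erase_of_mem hkT, hTt]⟩,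
      (insert_erase hkT).symm ▸ hp⟩
  · intro U hU
    simp only [mem_coe, mem_filter, mem_univ, true_and, mem_powersetCard] at hU ⊢
    obtain ⟨⟨hUk, hUt⟩, hp⟩ := hU
    have hkU : k ∉ U := fun h => by simpa using hUk h
    exact ⟨by rw [card_insert_of_notMem hkU]; omega, mem_insert_self k U, hp⟩
  · intro T hT
    simp only [mem_coe, mem_filter] at hT
    exact insert_erase hT.2.2.1
  · intro U hU
    simp only [mem_coe, mem_filter, mem_powersetCard] at hU
    exact erase_insert fun h => by simpa using hU.1.1 h

end

section
variable {ι : Type*} [Fintype ι] [DecidableEq ι]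

theorem card_filter_hammingDist_eq (k : ι → Bool) (d : ℕ) :
    #{z | hammingDist z k = d} = (Fintype.card ι).choose d := by
  rw [← card_univ, ← card_powersetCard]
  refine card_nbij' (fun z => ({i | z i ≠ k i} : Finset ι))
    (fun s i => if i ∈ s then !k i else k i) ?_ ?_ ?_ ?_
  · intro z hz
    simpa [mem_powersetCard, hammingDist] using hz
  · intro s hs
    simp only [mem_coe, mem_powersetCard, mem_filter, mem_univ, true_and] at hs ⊢
    rw [← hs.2, hammingDist]
    congr 1
    ext i
    by_cases h : i ∈ s <;> simp [h]
  · intro z _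
    funext i
    by_cases h : z i = k i
    · simp [h]
    · simp only [mem_filter, mem_univ, true_and, Ne, h, not_false_eq_true, if_true]
      exact Bool.not_eq_iff.2 (Ne.symm h)
  · intro s _
    ext i
    by_cases h : i ∈ s <;> simp [h]

theorem card_erase_filter_hammingDist_eq (k : ι → Bool) {d : ℕ} (hd : d ≠ 0) :
    #{z ∈ univ.erase k | hammingDist z k = d} = (Fintype.card ι).choose d := by
  rw [filter_erase, erase_eq_of_notMem (by simpa using hd.symm), card_filter_hammingDist_eq]

end

theorem uniform_sampling_joint_count_general (n : ℕ) (k : Fin n → Bool)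
    (d₁ d₂ t x₁ x₂ : ℕ) (hd₁ : 1 ≤ d₁) (hd₂ : 1 ≤ d₂)
    (hne : d₁ ≠ d₂) (hx : x₁ + x₂ < t) :
    (Finset.univ.filter (fun T : Finset (Fin n → Bool) =>
        T.card = t ∧ k ∈ T ∧
        (T.filter (fun z => hammingDist z k = d₁)).card = x₁ ∧
        (T.filter (fun z => hammingDist z k = d₂)).card = x₂)).card =
      (n.choose d₁).choose x₁ * (n.choose d₂).choose x₂ *
        (2 ^ n - 1 - n.choose d₁ - n.choose d₂).choose (t - 1 - x₁ - x₂) := by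
  have hk₁ : hammingDist k k ≠ d₁ := by rw [hammingDist_self]; omega
  have hk₂ : hammingDist k k ≠ d₂ := by rw [hammingDist_self]; omega
  have hdisj (z : Fin n → Bool) : hammingDist z k = d₁ → ¬hammingDist z k = d₂ :=
    fun h₁ h₂ => hne (h₁.symm.trans h₂)
  rw [card_filter_card_eq_and_mem_and k _ (by omega : 1 ≤ t)]
  simp only [filter_insert, hk₁, hk₂, if_false]
  rw [card_powersetCard_filter_card_filter_eq_and_card_filter_eq _ hdisj (by omega),
    card_filter_not_and_not _ hdisj,
    card_erase_filter_hammingDist_eq k (by omega : d₁ ≠ 0),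
    card_erase_filter_hammingDist_eq k (by omega : d₂ ≠ 0),
    card_erase_of_mem (mem_univ k), card_univ, Fintype.card_fun, Fintype.card_bool,
    Fintype.card_fin]

theorem uniform_sampling_joint_count (n : ℕ) (hn : 1 ≤ n) (k : Fin n → Bool)
    (d₁ d₂ t x₁ x₂ : ℕ) (hd₁ : 1 ≤ d₁) (hd₁n : d₁ ≤ n) (hd₂ : 1 ≤ d₂) (hd₂n : d₂ ≤ n)
    (hne : d₁ ≠ d₂) (hx : x₁ + x₂ < t) :
    (Finset.univ.filter (fun T : Finset (Fin n → Bool) =>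
        T.card = t ∧ k ∈ T ∧
        (T.filter (fun z => hammingDist z k = d₁)).card = x₁ ∧
        (T.filter (fun z => hammingDist z k = d₂)).card = x₂)).card =
      (n.choose d₁).choose x₁ * (n.choose d₂).choose x₂ *
        (2 ^ n - 1 - n.choose d₁ - n.choose d₂).choose (t - 1 - x₁ - x₂) :=
  uniform_sampling_joint_count_general n k d₁ d₂ t x₁ x₂ hd₁ hd₂ hne hx
end
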